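/- arXiv:2404.13094 — 2 statements merged into one kernel-verified Lean document; each statement's English description precedes it below -/
import Mathlib

section
/- For all nonzero real x and all μ with 0 < μ < 1, one has x²/((1 - e^{-x²}) e^{μ²x²/4}) < 4/μ². -/
theorem sq_div_bound (x μ : ℝ) (hx : x ≠ 0) (hμ0 : 0 < μ) (hμ1 : μ < 1) :
    x ^ 2 / ((1 - Real.exp (-x ^ 2)) * Real.exp (μ ^ 2 * x ^ 2 / 4)) < 4 / μ ^ 2 := by
  set t := x ^ 2 with htdef
  have ht : 0 < t := by positivity
  set a := μ ^ 2 * t / 4 with hadef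
  have ha : 0 < a := by positivity
  have hD : a < (1 - Real.exp (-t)) * Real.exp a := by
    have hexp : a + 1 ≤ Real.exp a := Real.add_one_le_exp a
    have hlt : Real.exp (a - t) < 1 := by
      apply Real.exp_lt_one_iff.mpr
      have : μ ^ 2 < 4 := by nlinarith
      rw [hadef]; nlinarith
    have : (1 - Real.exp (-t)) * Real.exp a = Real.exp a - Real.exp (a - t) := by
      rw [Real.exp_sub, sub_mul, one_mul, Real.exp_neg]
      field_simp
    rw [this]
    linarith
  have h1 : t / ((1 - Real.exp (-t)) * Real.exp a) < t / a :=
    div_lt_div_of_pos_left ht ha hD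
  have h2 : t / a = 4 / μ ^ 2 := by
    rw [hadef]
    field_simp
  linarith
end

section
/- Let β ∈ ℝⁿ, α², ν, t₀ > 0, 0 < μ < 1, z(ξ) = α²‖ξ‖² + i(β·ξ) + ν, Λ(ξ) = z(ξ)/(1 - e^{-z(ξ)t₀}), and R¹_μ(ξ) = Λ(ξ)/(1 + μ²‖ξ‖²). Then for all ξ ∈ ℝⁿ, |R¹_μ(ξ)| < M₁/μ² where M₁ = max{2ν + 2α² + √n‖β‖_∞, 2/t₀ + √n‖β‖_∞/(ν t₀)}. -/
/-!
With `a = Re z ≥ ν`, `B = √n ‖β‖_∞` and `r = ‖ξ‖`, we have `|Im z| ≤ B r`, and the bound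
`1 - e^{-x} ≥ x / (1 + x)` gives `|Λ| ≤ |z| (1 + 1 / (a t₀)) ≤ (ν + B r + α² r²) + (1/t₀ + B r / (ν t₀))`.
Each bracket is a quadratic `c₀ + c₁ r + c₂ r²`, and since `2 μ r ≤ 1 + μ² r²` and `μ < 1`,
dividing it by `1 + μ² r²` leaves less than `(c₀ + c₁ / 2 + c₂) / μ²`; the two constants so
obtained add up to the average of the two entries of the max.
-/

open Real

lemma inv_one_sub_exp_neg_le {x : ℝ} (hx : 0 < x) : (1 - exp (-x))⁻¹ ≤ 1 + x⁻¹ := by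
  have key : x / (1 + x) ≤ 1 - exp (-x) := by
    rw [exp_neg, div_le_iff₀ (by positivity)]
    have := add_one_le_exp x
    have := exp_pos x
    field_simp
    nlinarith
  calc (1 - exp (-x))⁻¹ ≤ (x / (1 + x))⁻¹ := inv_anti₀ (by positivity) key
    _ = 1 + x⁻¹ := by field_simp; ring

lemma norm_div_one_sub_cexp_neg_le {z : ℂ} (hz : 0 < z.re) {t : ℝ} (ht : 0 < t) :
    ‖z / (1 - Complex.exp (-(z * t)))‖ ≤ ‖z‖ * (1 + (z.re * t)⁻¹) := by
  have hx : 0 < z.re * t := mul_pos hz ht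
  have hlow : 1 - exp (-(z.re * t)) ≤ ‖1 - Complex.exp (-(z * t))‖ := by
    have h := norm_sub_norm_le (1 : ℂ) (Complex.exp (-(z * t)))
    rwa [Complex.norm_exp, norm_one, Complex.neg_re, Complex.re_mul_ofReal] at h
  have hpos : 0 < 1 - exp (-(z.re * t)) := by
    have := exp_lt_one_iff.mpr (neg_lt_zero.mpr hx)
    linarith
  rw [norm_div, div_eq_mul_inv]
  gcongr
  exact (inv_anti₀ hpos hlow).trans (inv_one_sub_exp_neg_le hx)

lemma norm_mul_one_add_inv_le {z : ℂ} {ν t : ℝ} (hν : 0 < ν) (hνz : ν ≤ z.re) (ht : 0 < t) :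
    ‖z‖ * (1 + (z.re * t)⁻¹) ≤ z.re + |z.im| + (1 + |z.im| / ν) / t := by
  have hz : 0 < z.re := hν.trans_le hνz
  calc ‖z‖ * (1 + (z.re * t)⁻¹) ≤ (z.re + |z.im|) * (1 + (z.re * t)⁻¹) := by
        gcongr
        simpa [abs_of_pos hz] using Complex.norm_le_abs_re_add_abs_im z
    _ = z.re + |z.im| + (1 + |z.im| / z.re) / t := by field_simp
    _ ≤ z.re + |z.im| + (1 + |z.im| / ν) / t := by gcongr

lemma quadratic_div_one_add_sq_mul_sq_lt {μ c₀ c₁ c₂ r : ℝ} (hμ0 : 0 < μ) (hμ1 : μ < 1)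
    (hc₀ : 0 < c₀) (hc₁ : 0 ≤ c₁) (hc₂ : 0 ≤ c₂) (hr : 0 ≤ r) :
    (c₀ + c₁ * r + c₂ * r ^ 2) / (1 + μ ^ 2 * r ^ 2) < (c₀ + c₁ / 2 + c₂) / μ ^ 2 := by
  rw [div_lt_div_iff₀ (by positivity) (by positivity)]
  have h₀ : c₀ * μ ^ 2 < c₀ * (1 + μ ^ 2 * r ^ 2) := by
    gcongr; nlinarith [sq_nonneg (μ * r)]
  have h₁ : c₁ * r * μ ^ 2 ≤ c₁ / 2 * (1 + μ ^ 2 * r ^ 2) := by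
    have : μ * r * μ ≤ μ * r := by nlinarith [mul_nonneg hμ0.le hr]
    nlinarith [mul_nonneg hc₁ (sq_nonneg (1 - μ * r)), mul_nonneg hc₁ (sub_nonneg.2 this)]
  nlinarith

lemma EuclideanSpace.norm_le_sqrt_card_mul_iSup_abs {ι : Type*} [Fintype ι]
    (x : EuclideanSpace ℝ ι) : ‖x‖ ≤ √(Fintype.card ι) * ⨆ i, |x i| := by
  have hS : 0 ≤ ⨆ i, |x i| := Real.iSup_nonneg fun i => abs_nonneg _
  rw [EuclideanSpace.norm_eq, ← Real.sqrt_sq hS, ← Real.sqrt_mul (Nat.cast_nonneg _)]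
  gcongr
  calc ∑ i, ‖x i‖ ^ 2 ≤ ∑ _i : ι, (⨆ i, |x i|) ^ 2 := by
        gcongr with i
        rw [Real.norm_eq_abs]
        exact le_ciSup (Set.finite_range fun j => |x j|).bddAbove i
    _ = Fintype.card ι * (⨆ i, |x i|) ^ 2 := by simp

theorem R15_bound {n : ℕ} (β : EuclideanSpace ℝ (Fin n))
    (α2 ν t0 μ : ℝ) (hα : 0 < α2) (hν : 0 < ν) (ht : 0 < t0)
    (hμ0 : 0 < μ) (hμ1 : μ < 1) :
    ∀ ξ : EuclideanSpace ℝ (Fin n),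
      norm
        (((((α2 * ‖ξ‖ ^ 2 + ν : ℝ) : ℂ) + (inner ℝ β ξ : ℝ) * Complex.I) /
            (1 - Complex.exp
              (-((((α2 * ‖ξ‖ ^ 2 + ν : ℝ) : ℂ) + (inner ℝ β ξ : ℝ) * Complex.I) * t0)))) /
          ((1 + μ ^ 2 * ‖ξ‖ ^ 2 : ℝ) : ℂ)) <
        (max (2 * ν + 2 * α2 + Real.sqrt n * (⨆ i, |β i|)) (2 / t0 + Real.sqrt n * (⨆ i, |β i|) / (ν * t0))) / μ ^ 2 := by
  intro ξ
  set B := √n * ⨆ i, |β i|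
  set r := ‖ξ‖
  set a := α2 * r ^ 2 + ν
  set z : ℂ := (a : ℂ) + (inner ℝ β ξ : ℂ) * Complex.I
  have hB : 0 ≤ B := mul_nonneg (sqrt_nonneg _) (iSup_nonneg fun _ => abs_nonneg _)
  have hre : z.re = a := by simp [z]
  have hνz : ν ≤ z.re := hre ▸ le_add_of_nonneg_left (by positivity)
  have him : |z.im| ≤ B * r := by
    have hβ := EuclideanSpace.norm_le_sqrt_card_mul_iSup_abs β
    rw [Fintype.card_fin] at hβ
    simpa [z] using
      (abs_real_inner_le_norm β ξ).trans (mul_le_mul_of_nonneg_right hβ (norm_nonneg ξ))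
  have hΛ : ‖z / (1 - Complex.exp (-(z * t0)))‖ ≤
      (ν + B * r + α2 * r ^ 2) + (1 / t0 + B / (ν * t0) * r + 0 * r ^ 2) := by
    refine (norm_div_one_sub_cexp_neg_le (hν.trans_le hνz) ht).trans <|
      (norm_mul_one_add_inv_le hν hνz ht).trans ?_
    calc z.re + |z.im| + (1 + |z.im| / ν) / t0 ≤ a + B * r + (1 + B * r / ν) / t0 := by
          rw [hre]; gcongr
      _ = _ := by field_simp; ring
  have hd : 0 < 1 + μ ^ 2 * r ^ 2 := by positivity
  rw [norm_div, Complex.norm_real, Real.norm_of_nonneg hd.le]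
  calc _ ≤ ((ν + B * r + α2 * r ^ 2) + (1 / t0 + B / (ν * t0) * r + 0 * r ^ 2)) /
        (1 + μ ^ 2 * r ^ 2) := by gcongr
    _ < (ν + B / 2 + α2) / μ ^ 2 + (1 / t0 + B / (ν * t0) / 2 + 0) / μ ^ 2 := by
        rw [add_div]
        gcongr ?_ + ?_ <;> apply quadratic_div_one_add_sq_mul_sq_lt hμ0 hμ1 <;> positivity
    _ = ((2 * ν + 2 * α2 + B) + (2 / t0 + B / (ν * t0))) / 2 / μ ^ 2 := by ring
    _ ≤ _ := by
        gcongr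
        linarith [le_max_left (2 * ν + 2 * α2 + B) (2 / t0 + B / (ν * t0)),
          le_max_right (2 * ν + 2 * α2 + B) (2 / t0 + B / (ν * t0))]
end
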